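/- Let T be a compact Hausdorff space. For trivial Hermitian bundles E = T × ℂⁿ and F = T × ℂᵐ, the canonical map μ : Γ(E) ⊗_{C(T)} Γ(F) → Γ(E ⊗ F) sending f ⊗ g to the section t ↦ f(t) ⊗ g(t) is a unitary isomorphism of Hilbert C(T)-modules. -/

import Mathlib

open scoped TensorProduct

/-- For trivial Hermitian bundles `E = T × ℂⁿ` and `F = T × ℂᵐ` over a compact
Hausdorff space `T`, whose Hilbert `C(T)`-modules of sections are the free
modules `C(T)ⁿ` and `C(T)ᵐ`, the canonical map
`μ : Γ(E) ⊗_{C(T)} Γ(F) → Γ(E ⊗ F)`, `f ⊗ g ↦ (t ↦ f(t) ⊗ g(t))`, is a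
unitary isomorphism of Hilbert `C(T)`-modules. -/
theorem stmt_11 {T : Type*} [TopologicalSpace T] [CompactSpace T] [T2Space T]
    (n m : ℕ) :
    -- sections of the trivial bundles and of their tensor product
    let R := C(T, ℂ)
    let M := Fin n → R        -- `Γ(T × ℂⁿ)`
    let N := Fin m → R        -- `Γ(T × ℂᵐ)`
    let P := Fin n × Fin m → R  -- `Γ(T × (ℂⁿ ⊗ ℂᵐ))`
    -- the pointwise `C(T)`-valued inner products coming from the Hermitian metrics
    let innM : M → M → R := fun f g => ∑ i, star (f i) * g i
    let innN : N → N → R := fun f g => ∑ j, star (f j) * g j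
    let innP : P → P → R := fun f g => ∑ p : Fin n × Fin m, star (f p) * g p
    ∃ μ : M ⊗[R] N →ₗ[R] P,
      -- `μ` is the canonical map `f ⊗ g ↦ (t ↦ f(t) ⊗ g(t))`
      (∀ (f : M) (g : N), μ (f ⊗ₜ g) = fun p => f p.1 * g p.2) ∧
      -- `μ` is an isomorphism
      Function.Bijective μ ∧
      -- `μ` is unitary: it intertwines the inner product
      -- `⟨f₁ ⊗ g₁ | f₂ ⊗ g₂⟩ = ⟨g₁ | ⟨f₁|f₂⟩ ▷ g₂⟩` with that of `Γ(E ⊗ F)`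
      (∀ (f₁ f₂ : M) (g₁ g₂ : N),
        innP (μ (f₁ ⊗ₜ g₁)) (μ (f₂ ⊗ₜ g₂)) = innN g₁ (innM f₁ f₂ • g₂)) := by
  intro R M N P innM innN innP
  let b : Module.Basis (Fin n × Fin m) R (M ⊗[R] N) :=
    (Pi.basisFun R (Fin n)).tensorProduct (Pi.basisFun R (Fin m))
  have key : ∀ (f : M) (g : N), b.equivFun (f ⊗ₜ g) = fun p => f p.1 * g p.2 := by
    intro f g; funext p
    rw [Module.Basis.equivFun_apply]
    show ((Pi.basisFun R (Fin n)).tensorProduct (Pi.basisFun R (Fin m))).repr (f ⊗ₜ g) p = _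
    rw [Module.Basis.tensorProduct_repr_tmul_apply]
    simp [Pi.basisFun_repr, mul_comm]
  refine ⟨b.equivFun.toLinearMap, key, b.equivFun.bijective, ?_⟩
  intro f₁ f₂ g₁ g₂
  simp only [LinearEquiv.coe_coe, key, innP, innN, innM]
  rw [Fintype.sum_prod_type_right]
  refine Finset.sum_congr rfl fun j _ => ?_
  simp only [Pi.smul_apply, smul_eq_mul, Finset.sum_mul, Finset.mul_sum, star_mul]
  rw [show ((∑ i, star (f₁ i) * f₂ i) • g₂) j = (∑ i, star (f₁ i) * f₂ i) * g₂ j from rfl,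
    Finset.sum_mul, Finset.mul_sum]
  refine Finset.sum_congr rfl fun i _ => ?_
  ring
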